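/- arXiv:1707.06624 — 3 statements merged into one kernel-verified Lean document; each statement's English description precedes it below -/
import Mathlib

section
/- If a group G of isometries of ℂ contains two primitive rotations of order m ≥ 2 with distinct fixed points and m ∉ {2,3,4,6}, then G contains translations of arbitrarily small nonzero translation length; in particular its action on ℂ is not properly discontinuous. -/
open Complex Metric
open scoped Real

/-!
The translation vectors of `G` form an additive subgroup `L` of `ℂ`. Conjugating by `r` and `r⁻¹`
shows `ζ • L ⊆ L` and `ζ⁻¹ • L ⊆ L` for `ζ = exp (2πi/m)`, and `r s⁻¹` is the translation by
`(1 - ζ) (p - q) ≠ 0`. Hence `L` is stable under multiplication by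
`w = ζ + ζ⁻¹ - 1 = 2 cos (2π/m) - 1`, which for `m ≥ 5`, `m ≠ 6` satisfies `0 < ‖w‖ < 1`, so the
vectors `w ^ k (1 - ζ) (p - q)` are nonzero and tend to `0`. Infinitely many of the corresponding
translations then move `0` within the closed unit disc.
-/

section Translations

variable {E : Type*} [AddCommGroup E] [PseudoEMetricSpace E]

def translationVectors (G : Subgroup (E ≃ᵢ E)) : AddSubgroup E where
  carrier := {v | ∃ g ∈ G, ∀ x, g x = x + v}
  zero_mem' := ⟨1, G.one_mem, fun x => by simp⟩
  add_mem' := by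
    rintro v w ⟨g, hgG, hg⟩ ⟨h, hhG, hh⟩
    exact ⟨g * h, G.mul_mem hgG hhG, fun x => by
      rw [IsometryEquiv.mul_apply, hh, hg, add_assoc, add_comm w]⟩
  neg_mem' := by
    rintro v ⟨g, hgG, hg⟩
    refine ⟨g⁻¹, G.inv_mem hgG, fun x => ?_⟩
    rw [← g.inv_apply_self (x + -v), hg, neg_add_cancel_right]

theorem sub_mem_translationVectors {G : Subgroup (E ≃ᵢ E)} {r s : E ≃ᵢ E} (hrG : r ∈ G)
    (hsG : s ∈ G) {c : E} (hrs : ∀ x, r x = s x + c) : c ∈ translationVectors G :=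
  ⟨r * s⁻¹, G.mul_mem hrG (G.inv_mem hsG), fun x => by
    rw [IsometryEquiv.mul_apply, hrs, s.apply_inv_self]⟩

end Translations

section Rotations

variable {G : Subgroup (ℂ ≃ᵢ ℂ)} {r : ℂ ≃ᵢ ℂ} {ζ p : ℂ}

theorem inv_apply_of_apply_eq_mul_sub_add (hζ : ζ ≠ 0) (hr : ∀ x, r x = ζ * (x - p) + p)
    (x : ℂ) : r⁻¹ x = ζ⁻¹ * (x - p) + p := by
  apply r.injective
  rw [r.apply_inv_self, hr]
  field_simp
  ring

theorem mul_mem_translationVectors_of_apply_eq (hrG : r ∈ G)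
    (hr : ∀ x, r x = ζ * (x - p) + p) {v : ℂ} (hv : v ∈ translationVectors G) :
    ζ * v ∈ translationVectors G := by
  obtain ⟨g, hgG, hg⟩ := hv
  refine ⟨r * g * r⁻¹, G.mul_mem (G.mul_mem hrG hgG) (G.inv_mem hrG), fun x => ?_⟩
  have hrv : r (r⁻¹ x + v) = r (r⁻¹ x) + ζ * v := by rw [hr, hr]; ring
  rw [IsometryEquiv.mul_apply, IsometryEquiv.mul_apply, hg, hrv, r.apply_inv_self]

end Rotations

theorem exists_ne_zero_norm_lt_of_smul_mem {𝕜 E : Type*} [NormedField 𝕜] [NormedAddCommGroup E]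
    [NormedSpace 𝕜 E] {L : Set E} {w : 𝕜} (hw0 : w ≠ 0) (hw1 : ‖w‖ < 1)
    (hwL : ∀ v ∈ L, w • v ∈ L) {v₀ : E} (hv₀L : v₀ ∈ L) (hv₀ : v₀ ≠ 0) {ε : ℝ} (hε : 0 < ε) :
    ∃ v ∈ L, v ≠ 0 ∧ ‖v‖ < ε := by
  have hpowL : ∀ k : ℕ, w ^ k • v₀ ∈ L := by
    intro k
    induction k with
    | zero => simpa using hv₀L
    | succ k ih => simpa [pow_succ', mul_smul] using hwL _ ih
  have hv₀pos : 0 < ‖v₀‖ := norm_pos_iff.mpr hv₀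
  obtain ⟨k, hk⟩ := exists_pow_lt_of_lt_one (div_pos hε hv₀pos) hw1
  refine ⟨w ^ k • v₀, hpowL k, smul_ne_zero (pow_ne_zero k hw0) hv₀, ?_⟩
  rw [norm_smul, norm_pow]
  exact (lt_div_iff₀ hv₀pos).mp hk

theorem infinite_setOf_image_closedBall_inter_nonempty {E : Type*} [NormedAddCommGroup E]
    {G : Subgroup (E ≃ᵢ E)}
    (hG : ∀ ε : ℝ, 0 < ε → ∃ v ∈ translationVectors G, v ≠ 0 ∧ ‖v‖ < ε) :
    {g : E ≃ᵢ E | g ∈ G ∧ (g '' closedBall 0 1 ∩ closedBall 0 1).Nonempty}.Infinite := by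
  intro hfin
  set D := {v ∈ translationVectors G | v ≠ 0 ∧ ‖v‖ ≤ 1}
  have hD : D ⊆ (fun g : E ≃ᵢ E => g 0) ''
      {g : E ≃ᵢ E | g ∈ G ∧ (g '' closedBall 0 1 ∩ closedBall 0 1).Nonempty} := by
    rintro v ⟨⟨g, hgG, hg⟩, -, hv1⟩
    have hg0 : g 0 = v := by rw [hg, zero_add]
    exact ⟨g, ⟨hgG, v, ⟨0, mem_closedBall_self zero_le_one, hg0⟩, mem_closedBall_zero_iff.mpr hv1⟩,
      hg0⟩
  have h0D : (0 : E) ∈ closure D := by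
    refine Metric.mem_closure_iff.mpr fun ε hε => ?_
    obtain ⟨v, hvL, hv0, hvε⟩ := hG (min ε 1) (lt_min hε one_pos)
    exact ⟨v, ⟨hvL, hv0, (hvε.trans_le (min_le_right _ _)).le⟩, by
      simpa using hvε.trans_le (min_le_left _ _)⟩
  rw [((hfin.image _).subset hD).isClosed.closure_eq] at h0D
  exact h0D.2.1 rfl

theorem abs_two_mul_cos_two_pi_div_sub_one_mem_Ioo {m : ℕ} (hm5 : 5 ≤ m) (hm6 : m ≠ 6) :
    |2 * Real.cos (2 * π / m) - 1| ∈ Set.Ioo 0 1 := by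
  have hm : (5 : ℝ) ≤ m := by exact_mod_cast hm5
  have hθ0 : 0 < 2 * π / m := by positivity
  have hθ : 2 * π / m < π / 2 := by
    rw [div_lt_div_iff₀ (by positivity) two_pos]
    nlinarith [Real.pi_pos]
  have hcos0 : 0 < Real.cos (2 * π / m) := by
    simpa using Real.cos_lt_cos_of_nonneg_of_le_pi hθ0.le (by linarith [Real.pi_pos]) hθ
  have hcos1 : Real.cos (2 * π / m) < 1 := by
    simpa using Real.cos_lt_cos_of_nonneg_of_le_pi le_rfl (by linarith) hθ0
  have hcos_half : Real.cos (2 * π / m) ≠ 1 / 2 := by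
    rw [← Real.cos_pi_div_three]
    intro h
    have hθ3 := Real.injOn_cos ⟨hθ0.le, by linarith⟩ ⟨by positivity, by linarith [Real.pi_pos]⟩ h
    field_simp at hθ3
    exact hm6 (by exact_mod_cast (by linarith [Real.pi_pos] : (m : ℝ) = 6))
  exact ⟨abs_pos.mpr fun h => hcos_half (by linarith), abs_lt.mpr ⟨by linarith, by linarith⟩⟩

theorem exp_add_inv_sub_one_eq_two_mul_cos_sub_one (m : ℕ) :
    exp (2 * π * I / m) + (exp (2 * π * I / m))⁻¹ - 1 =
      ((2 * Real.cos (2 * π / m) - 1 : ℝ) : ℂ) := by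
  rw [← exp_neg, show 2 * π * I / m = ((2 * π / m : ℝ) : ℂ) * I by push_cast; ring, ← neg_mul,
    ← two_cos, ofReal_sub, ofReal_mul, ofReal_cos]
  norm_num

/-- If a group `G` of isometries of `ℂ` contains two primitive rotations of order
`m ≥ 2` with distinct fixed points and `m ∉ {2,3,4,6}`, then `G` contains
translations of arbitrarily small nonzero translation length; in particular the
action of `G` on `ℂ` is not properly discontinuous. -/
theorem indiscrete_of_noncrystallographic (G : Subgroup (ℂ ≃ᵢ ℂ)) (m : ℕ) (hm : 2 ≤ m)
    (hm' : m ∉ ({2, 3, 4, 6} : Set ℕ)) (p q : ℂ) (hpq : p ≠ q)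
    (r s : ℂ ≃ᵢ ℂ) (hrG : r ∈ G) (hsG : s ∈ G)
    (hr : ∀ x, r x = Complex.exp (2 * Real.pi * Complex.I / m) * (x - p) + p)
    (hs : ∀ x, s x = Complex.exp (2 * Real.pi * Complex.I / m) * (x - q) + q) :
    (∀ ε : ℝ, 0 < ε → ∃ g ∈ G, ∃ v : ℂ, v ≠ 0 ∧ ‖v‖ < ε ∧
      ∀ x, g x = x + v) ∧
    ¬ (∀ K : Set ℂ, IsCompact K → {g : ℂ ≃ᵢ ℂ | g ∈ G ∧ (g '' K ∩ K).Nonempty}.Finite) := by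
  set ζ := exp (2 * π * I / m)
  set L := translationVectors G
  obtain ⟨hm5, hm6⟩ : 5 ≤ m ∧ m ≠ 6 := by
    simp only [Set.mem_insert_iff, Set.mem_singleton_iff, not_or] at hm'
    omega
  set w := ζ + ζ⁻¹ - 1 with hw
  obtain ⟨hw0, hw1⟩ : 0 < ‖w‖ ∧ ‖w‖ < 1 := by
    rw [hw, exp_add_inv_sub_one_eq_two_mul_cos_sub_one, norm_real, Real.norm_eq_abs]
    exact abs_two_mul_cos_two_pi_div_sub_one_mem_Ioo hm5 hm6
  have hwL : ∀ v ∈ L, w • v ∈ L := fun v hv => by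
    have hr' := inv_apply_of_apply_eq_mul_sub_add (exp_ne_zero _) hr
    rw [smul_eq_mul, sub_mul, add_mul, one_mul]
    exact L.sub_mem (L.add_mem (mul_mem_translationVectors_of_apply_eq hrG hr hv)
      (mul_mem_translationVectors_of_apply_eq (G.inv_mem hrG) hr' hv)) hv
  have hv₀L : (1 - ζ) * (p - q) ∈ L :=
    sub_mem_translationVectors hrG hsG fun x => by rw [hr, hs]; ring
  have hζ1 : ζ ≠ 1 := fun h => by simp [hw, h] at hw1
  have hv₀ : (1 - ζ) * (p - q) ≠ 0 := mul_ne_zero (sub_ne_zero.mpr hζ1.symm) (sub_ne_zero.mpr hpq)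
  have hsmall : ∀ ε : ℝ, 0 < ε → ∃ v ∈ L, v ≠ 0 ∧ ‖v‖ < ε := fun ε hε =>
    exists_ne_zero_norm_lt_of_smul_mem (norm_pos_iff.mp hw0) hw1 hwL hv₀L hv₀ hε
  refine ⟨fun ε hε => ?_, fun h => infinite_setOf_image_closedBall_inter_nonempty hsmall
    (h _ (isCompact_closedBall 0 1))⟩
  obtain ⟨v, ⟨g, hgG, hg⟩, hv0, hvε⟩ := hsmall ε hε
  exact ⟨g, hgG, v, hv0, hvε, hg⟩
end

section
/- The map r₁(x) = ζ x ζ on ℍ, where ζ = (1+i+j+k)/2, fixes the plane spanned by i-j and (i-j)ω pointwise (equivalently fixes every quaternion a+bi+cj+dk with a=0 and b+c+d=0) and has order 3. -/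
open Quaternion

/-!
Write `ζ = 1/2 + u` with `u = (i+j+k)/2`. A pure quaternion `x` orthogonal to `u` anticommutes
with `u`, so `ζ x = x ζ̄` and `ζ x ζ = x |ζ|² = x`. Order three comes from `ζ³ = -1`, and `r₁` is
not the identity because `r₁ 1 = ζ² = ω`.
-/

namespace Quaternion

variable {R : Type*} [CommRing R]

theorem mul_eq_neg_mul_of_re_eq_zero {u x : ℍ[R]} (hu : u.re = 0) (hx : x.re = 0)
    (h : u.imI * x.imI + u.imJ * x.imJ + u.imK * x.imK = 0) : u * x = -(x * u) := by
  ext <;> simp only [re_mul, imI_mul, imJ_mul, imK_mul, re_neg, imI_neg, imJ_neg, imK_neg, hu, hx]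
  · linear_combination (-2) * h
  all_goals ring

theorem star_eq_re_sub_im (q : ℍ[R]) : star q = q.re - q.im := by
  ext <;> simp

theorem mul_eq_mul_star_of_im_mul_eq_neg {q x : ℍ[R]} (h : q.im * x = -(x * q.im)) :
    q * x = x * star q :=
  calc q * x = (q.re + q.im) * x := by rw [re_add_im]
    _ = x * (q.re - q.im) := by
      rw [add_mul, h, coe_mul_eq_smul, mul_sub, mul_coe_eq_smul, sub_eq_add_neg]
    _ = x * star q := by rw [star_eq_re_sub_im]

theorem mul_mul_self_of_im_mul_eq_neg {q x : ℍ[R]} (h : q.im * x = -(x * q.im)) :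
    q * x * q = normSq q • x := by
  rw [mul_eq_mul_star_of_im_mul_eq_neg h, mul_assoc, star_mul_self, mul_coe_eq_smul]

end Quaternion

theorem mul_mul_mul_mul_mul_mul_eq_pow_three {A : Type*} [Monoid A] (a x : A) :
    a * (a * (a * x * a) * a) * a = a ^ 3 * x * a ^ 3 := by
  simp only [pow_succ, pow_zero, one_mul, mul_assoc]

/-- The map `r₁(x) = ζxζ` with `ζ = (1+i+j+k)/2` pointwise fixes the plane
spanned by `i-j` and `(i-j)ω` — equivalently, it fixes every quaternion
`a+bi+cj+dk` with `a = 0` and `b+c+d = 0` — and it has order 3. -/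
theorem r1_fixes_plane_order_three :
    let ζ : ℍ[ℝ] := ⟨1/2, 1/2, 1/2, 1/2⟩
    let ω : ℍ[ℝ] := ⟨-1/2, 1/2, 1/2, 1/2⟩
    let imj : ℍ[ℝ] := ⟨0, 1, -1, 0⟩
    (↑(Submodule.span ℝ ({imj, imj * ω} : Set ℍ[ℝ])) =
      {x : ℍ[ℝ] | x.re = 0 ∧ x.imI + x.imJ + x.imK = 0}) ∧
    (∀ x : ℍ[ℝ], x.re = 0 → x.imI + x.imJ + x.imK = 0 → ζ * x * ζ = x) ∧
    (∀ x : ℍ[ℝ], ζ * (ζ * (ζ * x * ζ) * ζ) * ζ = x) ∧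
    (∃ x : ℍ[ℝ], ζ * x * ζ ≠ x) := by
  intro ζ ω imj
  have hnormSq : normSq ζ = 1 := by rw [normSq_def']; norm_num [ζ]
  have hsq : ζ * ζ = ω := by
    ext <;> simp only [re_mul, imI_mul, imJ_mul, imK_mul] <;> norm_num [ζ, ω]
  have hpow_three : ζ ^ 3 = -1 := by
    rw [pow_three', hsq]
    ext <;> simp only [re_mul, imI_mul, imJ_mul, imK_mul] <;> norm_num [ζ, ω]
  refine ⟨?_, fun x hre hsum => ?_, fun x => ?_, ⟨1, fun h => ?_⟩⟩
  · ext x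
    rw [SetLike.mem_coe, Submodule.mem_span_pair]
    constructor
    · rintro ⟨a, b, rfl⟩
      constructor <;> simp only [re_add, imI_add, imJ_add, imK_add, re_smul, imI_smul, imJ_smul,
        imK_smul, re_mul, imI_mul, imJ_mul, imK_mul] <;> norm_num [imj, ω]
    · rintro ⟨hre, hsum⟩
      refine ⟨-x.imJ, x.imK, ?_⟩
      ext <;> simp only [re_add, imI_add, imJ_add, imK_add, re_smul, imI_smul, imJ_smul,
        imK_smul, re_mul, imI_mul, imJ_mul, imK_mul] <;> norm_num [imj, ω] <;> linarith
  · have hanti : ζ.im * x = -(x * ζ.im) :=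
      mul_eq_neg_mul_of_re_eq_zero (by simp) hre (by
        show (1/2 : ℝ) * x.imI + 1/2 * x.imJ + 1/2 * x.imK = 0
        linear_combination hsum / 2)
    rw [mul_mul_self_of_im_mul_eq_neg hanti, hnormSq, one_smul]
  · rw [mul_mul_mul_mul_mul_mul_eq_pow_three, hpow_three, neg_one_mul, mul_neg_one, neg_neg]
  · rw [mul_one, hsq] at h
    have := congrArg QuaternionAlgebra.re h
    norm_num [ω] at this
end

section
/- The fixed-point set of the affine map r₁'(x) = ζ x ζ + 2 on ℍ, with ζ = (1+i+j+k)/2, is {a+bi+cj+dk : a=1, b+c+d=1}, and the fixed-point set of r_i(x) = ζ^i x ζ (where ζ^i = (-i)ζ i) is {a+bi+cj+dk : b=0, a+c-d=0}. The unique common fixed point of r₁' and r_i is 1+k. -/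
/-!
For `x = a + bi + cj + dk` one computes
`ζxζ = ½(-(a+b+c+d) + (a+b-c-d)i + (a-b+c-d)j + (a-b-c+d)k)` and `ζ^i = ½(1 + i - j - k)`,
so both fixed-point conditions are linear systems in `a, b, c, d`.
Together they force `b = 0`, `a = 1`, `c + d = 1` and `d - c = 1`, i.e. `x = 1 + k`.
-/

open Quaternion

namespace QuaternionZeta

noncomputable def zeta : ℍ[ℝ] := ⟨1/2, 1/2, 1/2, 1/2⟩

/-- The conjugate `(-i) ζ i` of `zeta`. -/
noncomputable def zetaConjI : ℍ[ℝ] := ⟨1/2, 1/2, -1/2, -1/2⟩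

section Coordinates

variable (x : ℍ[ℝ])

theorem re_zeta_mul_mul_zeta :
    (zeta * x * zeta).re = -(x.re + x.imI + x.imJ + x.imK) / 2 := by
  simp only [re_mul, imI_mul, imJ_mul, imK_mul]; simp [zeta]; ring

theorem imI_zeta_mul_mul_zeta :
    (zeta * x * zeta).imI = (x.re + x.imI - x.imJ - x.imK) / 2 := by
  simp only [re_mul, imI_mul, imJ_mul, imK_mul]; simp [zeta]; ring

theorem imJ_zeta_mul_mul_zeta :
    (zeta * x * zeta).imJ = (x.re - x.imI + x.imJ - x.imK) / 2 := by
  simp only [re_mul, imI_mul, imJ_mul, imK_mul]; simp [zeta]; ring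

theorem imK_zeta_mul_mul_zeta :
    (zeta * x * zeta).imK = (x.re - x.imI - x.imJ + x.imK) / 2 := by
  simp only [re_mul, imI_mul, imJ_mul, imK_mul]; simp [zeta]; ring

theorem re_zetaConjI_mul_mul_zeta :
    (zetaConjI * x * zeta).re = (x.re - x.imI - x.imJ + x.imK) / 2 := by
  simp only [re_mul, imI_mul, imJ_mul, imK_mul]; simp [zeta, zetaConjI]; ring

theorem imI_zetaConjI_mul_mul_zeta :
    (zetaConjI * x * zeta).imI = (x.re - x.imI + x.imJ - x.imK) / 2 := by
  simp only [re_mul, imI_mul, imJ_mul, imK_mul]; simp [zeta, zetaConjI]; ring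

theorem imJ_zetaConjI_mul_mul_zeta :
    (zetaConjI * x * zeta).imJ = (-x.re - x.imI + x.imJ + x.imK) / 2 := by
  simp only [re_mul, imI_mul, imJ_mul, imK_mul]; simp [zeta, zetaConjI]; ring

theorem imK_zetaConjI_mul_mul_zeta :
    (zetaConjI * x * zeta).imK = (x.re + x.imI + x.imJ + x.imK) / 2 := by
  simp only [re_mul, imI_mul, imJ_mul, imK_mul]; simp [zeta, zetaConjI]; ring

end Coordinates

theorem zeta_mul_mul_zeta_add_two_eq_self_iff (x : ℍ[ℝ]) :
    zeta * x * zeta + 2 = x ↔ x.re = 1 ∧ x.imI + x.imJ + x.imK = 1 := by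
  have two_eq_coe : (2 : ℍ[ℝ]) = ((2 : ℝ) : ℍ[ℝ]) := rfl
  simp only [Quaternion.ext_iff, two_eq_coe, re_add, imI_add, imJ_add, imK_add, re_coe, imI_coe,
    imJ_coe, imK_coe, re_zeta_mul_mul_zeta, imI_zeta_mul_mul_zeta, imJ_zeta_mul_mul_zeta,
    imK_zeta_mul_mul_zeta]
  constructor
  · rintro ⟨hre, hi, -, -⟩
    constructor <;> linarith
  · rintro ⟨hre, hsum⟩
    refine ⟨?_, ?_, ?_, ?_⟩ <;> linarith

theorem zetaConjI_mul_mul_zeta_eq_self_iff (x : ℍ[ℝ]) :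
    zetaConjI * x * zeta = x ↔ x.imI = 0 ∧ x.re + x.imJ - x.imK = 0 := by
  simp only [Quaternion.ext_iff, re_zetaConjI_mul_mul_zeta, imI_zetaConjI_mul_mul_zeta,
    imJ_zetaConjI_mul_mul_zeta, imK_zetaConjI_mul_mul_zeta]
  constructor
  · rintro ⟨-, hi, -, hk⟩
    constructor <;> linarith
  · rintro ⟨hi, hsum⟩
    refine ⟨?_, ?_, ?_, ?_⟩ <;> linarith

theorem fixed_conditions_iff (x : ℍ[ℝ]) :
    (x.re = 1 ∧ x.imI + x.imJ + x.imK = 1) ∧ (x.imI = 0 ∧ x.re + x.imJ - x.imK = 0) ↔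
      x.re = 1 ∧ x.imI = 0 ∧ x.imJ = 0 ∧ x.imK = 1 := by
  constructor
  · rintro ⟨⟨hre, hsum⟩, hi, hdiff⟩
    refine ⟨hre, hi, ?_, ?_⟩ <;> linarith
  · rintro ⟨hre, hi, hj, hk⟩
    refine ⟨⟨hre, ?_⟩, hi, ?_⟩ <;> linarith

end QuaternionZeta

open QuaternionZeta in
/-- Fixed sets of `r₁'(x) = ζxζ + 2` and `r_i(x) = ζ^i x ζ` (with
`ζ = (1+i+j+k)/2` and `ζ^i = (-i)ζi`), and their unique common fixed point
`1 + k`. -/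
theorem fixed_sets_r1'_ri :
    let ζ : ℍ[ℝ] := ⟨1/2, 1/2, 1/2, 1/2⟩
    let qi : ℍ[ℝ] := ⟨0, 1, 0, 0⟩
    let qk : ℍ[ℝ] := ⟨0, 0, 0, 1⟩
    let ζi : ℍ[ℝ] := (-qi) * ζ * qi
    ({x : ℍ[ℝ] | ζ * x * ζ + 2 = x} =
      {x : ℍ[ℝ] | x.re = 1 ∧ x.imI + x.imJ + x.imK = 1}) ∧
    ({x : ℍ[ℝ] | ζi * x * ζ = x} =
      {x : ℍ[ℝ] | x.imI = 0 ∧ x.re + x.imJ - x.imK = 0}) ∧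
    ({x : ℍ[ℝ] | ζ * x * ζ + 2 = x} ∩ {x : ℍ[ℝ] | ζi * x * ζ = x} =
      {1 + qk}) := by
  intro ζ qi qk ζi
  have hζi : ζi = zetaConjI := by
    ext <;>
      simp only [ζi, re_mul, imI_mul, imJ_mul, imK_mul, re_neg, imI_neg, imJ_neg, imK_neg] <;>
      simp [qi, ζ, zetaConjI] <;> norm_num
  have hqk (x : ℍ[ℝ]) : x = 1 + qk ↔ x.re = 1 ∧ x.imI = 0 ∧ x.imJ = 0 ∧ x.imK = 1 := by
    simp only [Quaternion.ext_iff, re_add, imI_add, imJ_add, imK_add, re_one, imI_one, imJ_one,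
      imK_one]
    simp [qk]
  have h₁ : {x : ℍ[ℝ] | ζ * x * ζ + 2 = x} = {x | x.re = 1 ∧ x.imI + x.imJ + x.imK = 1} :=
    Set.ext zeta_mul_mul_zeta_add_two_eq_self_iff
  have h₂ : {x : ℍ[ℝ] | ζi * x * ζ = x} = {x | x.imI = 0 ∧ x.re + x.imJ - x.imK = 0} := by
    rw [hζi]
    exact Set.ext zetaConjI_mul_mul_zeta_eq_self_iff
  refine ⟨h₁, h₂, ?_⟩
  rw [h₁, h₂]
  exact Set.ext fun x => (fixed_conditions_iff x).trans (hqk x).symm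
end
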